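/- Let p* be a minimizer of the sample-weighted classification error E_{α,β} over all feasible calibrations, and let 0 = n_1 < n_2 < … < n_{I+1} = N be its maximal block decomposition (pairwise distinct block values v_1 < … < v_I). Writing Y_i = Σ_{n=n_i+1}^{n_{i+1}} β_n y_n and B_i = Σ_{n=n_i+1}^{n_{i+1}} β_n, every interior block i ∈ {2,…,I−1} satisfies Y_i = B_i/(α+1); the first block satisfies Y_1 < B_1/(α+1); and the last block satisfies Y_I > B_I/(α+1). -/

import Mathlib

/-- A feasible calibration: a nondecreasing vector `p 1, …, p N` with values in `[0,1]`. -/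
def Feasible (N : ℕ) (p : ℕ → ℝ) : Prop :=
  0 ≤ p 1 ∧ p N ≤ 1 ∧ ∀ n, 1 ≤ n → n < N → p n ≤ p (n + 1)

/-- The sample-weighted classification error
`E_{α,β}(p) = Σ_{n=1}^N β_n [α y_n (1 - p_n) + (1 - y_n) p_n]`. -/
def clErrS (N : ℕ) (α : ℝ) (β y p : ℕ → ℝ) : ℝ :=
  ∑ n ∈ Finset.Icc 1 N, β n * (α * y n * (1 - p n) + (1 - y n) * p n)

/-- A block decomposition of `p`: boundary indices `0 = nI 1 < nI 2 < … < nI (I+1) = N`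
such that `p` is constant, equal to `v i`, on each block `{nI i + 1, …, nI (i+1)}`. -/
def BlockDecomp (N I : ℕ) (p : ℕ → ℝ) (nI : ℕ → ℕ) (v : ℕ → ℝ) : Prop :=
  nI 1 = 0 ∧ nI (I + 1) = N ∧ (∀ i, 1 ≤ i → i ≤ I → nI i < nI (i + 1)) ∧
    ∀ i, 1 ≤ i → i ≤ I → ∀ n, nI i + 1 ≤ n → n ≤ nI (i + 1) → p n = v i

lemma pmono (N : ℕ) (p : ℕ → ℝ) (hp : Feasible N p) :
    ∀ n, n ≤ N → ∀ m, 1 ≤ m → m ≤ n → p m ≤ p n := by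
  intro n
  induction n with
  | zero => intro _ m hm hmn; omega
  | succ k ih =>
    intro hkN m hm hmk
    rcases Nat.lt_or_ge m (k+1) with h | h
    · have h1 : p m ≤ p k := ih (by omega) m hm (by omega)
      have h2 : p k ≤ p (k+1) := hp.2.2 k (by omega) (by omega)
      linarith
    · have hmeq : m = k+1 := by omega
      rw [hmeq]

lemma pert (N : ℕ) (α : ℝ) (β y p : ℕ → ℝ) (a b : ℕ) (ha : 1 ≤ a) (hb : b ≤ N)
    (c w : ℝ) (hconst : ∀ n, a ≤ n → n ≤ b → p n = c)
    (q : ℕ → ℝ) (hq : ∀ n, q n = if a ≤ n ∧ n ≤ b then w else p n)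
    (hle : clErrS N α β y p ≤ clErrS N α β y q) :
    0 ≤ (w - c) * ∑ n ∈ Finset.Icc a b, β n * (1 - (α + 1) * y n) := by
  have key : clErrS N α β y q - clErrS N α β y p
      = ∑ n ∈ Finset.Icc a b, (β n * (1 - (α+1) * y n)) * (w - c) := by
    unfold clErrS
    rw [← Finset.sum_sub_distrib]
    rw [← Finset.sum_subset (Finset.Icc_subset_Icc ha hb)]
    · apply Finset.sum_congr rfl
      intro n hn
      simp only [Finset.mem_Icc] at hn
      have hqn : q n = w := by rw [hq n, if_pos ⟨hn.1, hn.2⟩]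
      rw [hqn, hconst n hn.1 hn.2]; ring
    · intro n _ hn'
      simp only [Finset.mem_Icc] at hn'
      have hqn : q n = p n := by rw [hq n, if_neg hn']
      rw [hqn]; ring
  rw [← Finset.sum_mul] at key
  nlinarith [key]

lemma feas_of (N a b : ℕ) (p : ℕ → ℝ) (w : ℝ) (hp : Feasible N p)
    (h2a : 2 ≤ a) (hbN : b < N)
    (hlow : a ≤ b → p (a - 1) ≤ w)
    (hhigh : a ≤ b → w ≤ p (b + 1)) :
    Feasible N (fun n => if a ≤ n ∧ n ≤ b then w else p n) := by
  obtain ⟨h0, h1, hstep⟩ := hp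
  refine ⟨?_, ?_, ?_⟩
  · show (0:ℝ) ≤ if a ≤ 1 ∧ 1 ≤ b then w else p 1
    rw [if_neg (by omega)]
    exact h0
  · show (if a ≤ N ∧ N ≤ b then w else p N) ≤ 1
    rw [if_neg (by omega)]
    exact h1
  · intro n hn hnN
    show (if a ≤ n ∧ n ≤ b then w else p n) ≤ (if a ≤ n+1 ∧ n+1 ≤ b then w else p (n+1))
    by_cases hna : a ≤ n ∧ n ≤ b
    · rw [if_pos hna]
      by_cases hnb : n + 1 ≤ b
      · rw [if_pos ⟨by omega, hnb⟩]
      · rw [if_neg (by omega)]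
        have hb1 : b = n := by omega
        have := hhigh (by omega)
        rw [hb1] at this
        exact this
    · rw [if_neg hna]
      by_cases hnb : a ≤ n + 1 ∧ n + 1 ≤ b
      · rw [if_pos hnb]
        have hna' : a - 1 = n := by omega
        have := hlow (by omega)
        rw [hna'] at this
        exact this
      · rw [if_neg hnb]
        exact hstep n hn hnN

lemma sum_split (α : ℝ) (β y : ℕ → ℝ) (s : Finset ℕ) :
    ∑ n ∈ s, β n * (1 - (α+1) * y n)
      = (∑ n ∈ s, β n) - (α+1) * ∑ n ∈ s, β n * y n := by
  rw [Finset.mul_sum, ← Finset.sum_sub_distrib]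
  exact Finset.sum_congr rfl (fun n _ => by ring)

lemma icc_insert_left (a b : ℕ) (h : a ≤ b) :
    Finset.Icc a b = insert a (Finset.Icc (a+1) b) := by
  ext n
  simp only [Finset.mem_Icc, Finset.mem_insert]
  omega

lemma icc_insert_right (a b : ℕ) (h : a ≤ b) (hb : 1 ≤ b) :
    Finset.Icc a b = insert b (Finset.Icc a (b-1)) := by
  ext n
  simp only [Finset.mem_Icc, Finset.mem_insert]
  omega

theorem stmt9 (N : ℕ) (hN : 2 ≤ N) (y : ℕ → ℝ)
    (hy : ∀ n ∈ Finset.Icc 1 N, y n = 0 ∨ y n = 1)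
    (hy1 : y 1 = 0) (hyN : y N = 1)
    (α : ℝ) (hα : 0 < α)
    (β : ℕ → ℝ) (hβ : ∀ n ∈ Finset.Icc 1 N, 0 < β n)
    (p : ℕ → ℝ) (hp : Feasible N p)
    (hmin : ∀ q, Feasible N q → clErrS N α β y p ≤ clErrS N α β y q)
    (I : ℕ) (hI : 1 ≤ I) (nI : ℕ → ℕ) (v : ℕ → ℝ)
    (hblock : BlockDecomp N I p nI v)
    (hmax : ∀ i j, 1 ≤ i → i < j → j ≤ I → v i < v j) :
    (∀ i, 2 ≤ i → i ≤ I - 1 →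
      (∑ n ∈ Finset.Icc (nI i + 1) (nI (i + 1)), β n * y n) =
        (∑ n ∈ Finset.Icc (nI i + 1) (nI (i + 1)), β n) / (α + 1)) ∧
    (∑ n ∈ Finset.Icc (nI 1 + 1) (nI 2), β n * y n) <
      (∑ n ∈ Finset.Icc (nI 1 + 1) (nI 2), β n) / (α + 1) ∧
    (∑ n ∈ Finset.Icc (nI I + 1) (nI (I + 1)), β n * y n) >
      (∑ n ∈ Finset.Icc (nI I + 1) (nI (I + 1)), β n) / (α + 1) := by
  obtain ⟨hn1, hnN, hinc, hv⟩ := hblock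
  have hα1 : (0:ℝ) < α + 1 := by linarith
  have hβ1 : 0 < β 1 := hβ 1 (Finset.mem_Icc.mpr ⟨le_rfl, by omega⟩)
  have hβN : 0 < β N := hβ N (Finset.mem_Icc.mpr ⟨by omega, le_rfl⟩)
  -- monotonicity of nI
  have hmono : ∀ j, j ≤ I + 1 → ∀ i, 1 ≤ i → i ≤ j → nI i ≤ nI j := by
    intro j
    induction j with
    | zero => intro _ i h1 h2; omega
    | succ k ih =>
      intro hk i h1 h2
      rcases Nat.lt_or_ge i (k+1) with h | h
      · have h3 : nI i ≤ nI k := ih (by omega) i h1 (by omega)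
        have h4 : nI k < nI (k+1) := hinc k (by omega) (by omega)
        omega
      · have hieq : i = k+1 := by omega
        rw [hieq]
  have hnI2 : 1 ≤ nI 2 := by
    have h : nI 1 < nI 2 := hinc 1 le_rfl hI
    omega
  have hnIIlt : nI I < N := by have := hinc I hI le_rfl; omega
  -- Step 1 : p 1 = 0
  have hq1feas : Feasible N (fun n => if 1 ≤ n ∧ n ≤ 1 then (0:ℝ) else p n) := by
    refine ⟨?_, ?_, ?_⟩
    · show (0:ℝ) ≤ if 1 ≤ 1 ∧ 1 ≤ 1 then (0:ℝ) else p 1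
      rw [if_pos ⟨le_rfl, le_rfl⟩]
    · show (if 1 ≤ N ∧ N ≤ 1 then (0:ℝ) else p N) ≤ 1
      rw [if_neg (by omega)]; exact hp.2.1
    · intro n hn hnN'
      show (if 1 ≤ n ∧ n ≤ 1 then (0:ℝ) else p n) ≤
        (if 1 ≤ n+1 ∧ n+1 ≤ 1 then (0:ℝ) else p (n+1))
      by_cases h : n = 1
      · subst h
        rw [if_pos ⟨le_rfl, le_rfl⟩, if_neg (by omega)]
        have := hp.2.2 1 le_rfl hnN'
        linarith [hp.1]
      · rw [if_neg (by omega), if_neg (by omega)]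
        exact hp.2.2 n hn hnN'
  have h1key := pert N α β y p 1 1 le_rfl (by omega) (p 1) 0
    (fun n ha hb => by have h : n = 1 := (by omega); exact congrArg p h)
    _ (fun n => rfl) (hmin _ hq1feas)
  rw [Finset.Icc_self, Finset.sum_singleton, hy1] at h1key
  have hp10 : p 1 = 0 := le_antisymm (by nlinarith [hp.1]) hp.1
  -- Step 2 : p N = 1
  have hqNfeas : Feasible N (fun n => if N ≤ n ∧ n ≤ N then (1:ℝ) else p n) := by
    refine ⟨?_, ?_, ?_⟩
    · show (0:ℝ) ≤ if N ≤ 1 ∧ 1 ≤ N then (1:ℝ) else p 1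
      rw [if_neg (by omega)]; exact hp.1
    · show (if N ≤ N ∧ N ≤ N then (1:ℝ) else p N) ≤ 1
      rw [if_pos ⟨le_rfl, le_rfl⟩]
    · intro n hn hnN'
      show (if N ≤ n ∧ n ≤ N then (1:ℝ) else p n) ≤
        (if N ≤ n+1 ∧ n+1 ≤ N then (1:ℝ) else p (n+1))
      rw [if_neg (by omega)]
      by_cases h : n + 1 = N
      · rw [if_pos (by omega)]
        have := pmono N p hp N le_rfl n (by omega) (by omega)
        linarith [hp.2.1]
      · rw [if_neg (by omega)]
        exact hp.2.2 n hn hnN'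
  have hNkey := pert N α β y p N N (by omega) le_rfl (p N) 1
    (fun n ha hb => by have h : n = N := (by omega); exact congrArg p h)
    _ (fun n => rfl) (hmin _ hqNfeas)
  rw [Finset.Icc_self, Finset.sum_singleton, hyN] at hNkey
  have hpN1 : p N = 1 := le_antisymm hp.2.1 (by nlinarith [mul_pos hα hβN])
  -- values of first and last block
  have hv1 : v 1 = 0 := by
    rw [← hv 1 le_rfl hI 1 (by omega) (by exact hnI2), hp10]
  have hvI : v I = 1 := by
    rw [← hv I hI le_rfl N (by omega) (by omega), hpN1]
  have hI2 : 2 ≤ I := by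
    by_contra h
    have hIe : I = 1 := by omega
    rw [hIe] at hvI
    rw [hvI] at hv1
    norm_num at hv1
  refine ⟨?_, ?_, ?_⟩
  · -- interior blocks
    intro i h2i hiI
    have hi1 : i + 1 ≤ I := by omega
    have hnIi1 : 1 ≤ nI i := by
      have := hmono i (by omega) 2 (by omega) h2i
      omega
    have hbN : nI (i+1) < N := by
      have h1 : nI (i+1) ≤ nI I := hmono I (by omega) (i+1) (by omega) hi1
      omega
    have hconst : ∀ n, nI i + 1 ≤ n → n ≤ nI (i+1) → p n = v i :=
      fun n h1 h2 => hv i (by omega) (by omega) n h1 h2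
    have hee : i - 1 + 1 = i := by omega
    have hloweq : p (nI i + 1 - 1) = v (i-1) := by
      have h1 : nI (i-1) < nI i := by
        have := hinc (i-1) (by omega) (by omega)
        rw [hee] at this; exact this
      have h2 : nI i + 1 - 1 = nI i := by omega
      rw [h2]
      exact hv (i-1) (by omega) (by omega) (nI i) (by omega) (hee ▸ le_rfl)

    have hhigheq : p (nI (i+1) + 1) = v (i+1) := by
      have h1 : nI (i+1) < nI (i+1+1) := hinc (i+1) (by omega) hi1
      exact hv (i+1) (by omega) hi1 (nI (i+1) + 1) le_rfl (by omega)
    have hlt1 : v (i-1) < v i := by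
      have := hmax (i-1) i (by omega) (by omega) (by omega)
      exact this
    have hlt2 : v i < v (i+1) := hmax i (i+1) (by omega) (by omega) hi1
    have hf1 := feas_of N (nI i + 1) (nI (i+1)) p (v (i-1)) hp (by omega) hbN
      (fun _ => le_of_eq hloweq) (fun _ => by rw [hhigheq]; linarith)
    have hf2 := feas_of N (nI i + 1) (nI (i+1)) p (v (i+1)) hp (by omega) hbN
      (fun _ => by rw [hloweq]; linarith) (fun _ => le_of_eq hhigheq.symm)
    have key1 := pert N α β y p (nI i + 1) (nI (i+1)) (by omega) (by omega)
      (v i) (v (i-1)) hconst _ (fun n => rfl) (hmin _ hf1)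
    have key2 := pert N α β y p (nI i + 1) (nI (i+1)) (by omega) (by omega)
      (v i) (v (i+1)) hconst _ (fun n => rfl) (hmin _ hf2)
    have hS0 : ∑ n ∈ Finset.Icc (nI i + 1) (nI (i+1)), β n * (1-(α+1)*y n) = 0 := by
      have hle1 : (∑ n ∈ Finset.Icc (nI i + 1) (nI (i+1)), β n * (1-(α+1)*y n)) ≤ 0 := by
        nlinarith [key1]
      have hle2 : 0 ≤ ∑ n ∈ Finset.Icc (nI i + 1) (nI (i+1)), β n * (1-(α+1)*y n) := by
        nlinarith [key2]
      linarith
    rw [eq_div_iff (ne_of_gt hα1)]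
    have hsp := sum_split α β y (Finset.Icc (nI i + 1) (nI (i+1)))
    linarith
  · -- first block
    have hbN : nI 2 < N := by
      have h1 : nI 2 ≤ nI I := hmono I (by omega) 2 (by omega) hI2
      omega
    have hv2pos : 0 < v 2 := by
      have := hmax 1 2 le_rfl one_lt_two hI2
      linarith [hv1]
    have hf := feas_of N 2 (nI 2) p (v 2) hp le_rfl hbN
      (fun _ => by
        have h21 : (2:ℕ) - 1 = 1 := rfl
        rw [h21, hp10]; linarith)
      (fun _ => by
        have e : p (nI 2 + 1) = v 2 := by
          have := hinc 2 (by omega) hI2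
          exact hv 2 (by omega) hI2 (nI 2 + 1) le_rfl (by omega)
        rw [e])
    have hconst : ∀ n, 2 ≤ n → n ≤ nI 2 → p n = v 1 :=
      fun n h1 h2 => hv 1 le_rfl hI n (by omega) (by exact h2)
    have key := pert N α β y p 2 (nI 2) (by omega) (by omega) (v 1) (v 2)
      hconst _ (fun n => rfl) (hmin _ hf)
    have hT : 0 ≤ ∑ n ∈ Finset.Icc 2 (nI 2), β n * (1-(α+1)*y n) := by
      have hlt : v 1 < v 2 := hmax 1 2 le_rfl one_lt_two hI2
      nlinarith [key]
    have hdec : Finset.Icc 1 (nI 2) = insert 1 (Finset.Icc 2 (nI 2)) :=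
      icc_insert_left 1 (nI 2) (by omega)
    have h1n : (1:ℕ) ∉ Finset.Icc 2 (nI 2) := by
      simp only [Finset.mem_Icc]; omega
    have hS1 : 0 < ∑ n ∈ Finset.Icc 1 (nI 2), β n * (1-(α+1)*y n) := by
      rw [hdec, Finset.sum_insert h1n, hy1, mul_zero, sub_zero, mul_one]
      linarith
    have hgoal : nI 1 + 1 = 1 := by omega
    rw [hgoal, lt_div_iff₀ hα1]
    have hsp := sum_split α β y (Finset.Icc 1 (nI 2))
    linarith
  · -- last block
    have hnII1 : 1 ≤ nI I := by
      have := hmono I (by omega) 2 (by omega) hI2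
      omega
    have hee : I - 1 + 1 = I := by omega
    have hloweq : p (nI I + 1 - 1) = v (I-1) := by
      have h1 : nI (I-1) < nI I := by
        have := hinc (I-1) (by omega) (by omega)
        rw [hee] at this; exact this
      have h2 : nI I + 1 - 1 = nI I := by omega
      rw [h2]
      exact hv (I-1) (by omega) (by omega) (nI I) (by omega) (hee ▸ le_rfl)
    have hltI : v (I-1) < v I := hmax (I-1) I (by omega) (by omega) le_rfl
    have hf := feas_of N (nI I + 1) (N-1) p (v (I-1)) hp (by omega) (by omega)
      (fun _ => le_of_eq hloweq)
      (fun _ => by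
        have e : N - 1 + 1 = N := by omega
        rw [e, hpN1]; linarith [hvI])
    have hconst : ∀ n, nI I + 1 ≤ n → n ≤ N - 1 → p n = v I :=
      fun n h1 h2 => hv I hI le_rfl n h1 (by omega)
    have key := pert N α β y p (nI I + 1) (N-1) (by omega) (by omega) (v I) (v (I-1))
      hconst _ (fun n => rfl) (hmin _ hf)
    have hU : (∑ n ∈ Finset.Icc (nI I + 1) (N-1), β n * (1-(α+1)*y n)) ≤ 0 := by
      nlinarith [key]
    have hdec : Finset.Icc (nI I + 1) N = insert N (Finset.Icc (nI I + 1) (N-1)) :=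
      icc_insert_right (nI I + 1) N (by omega) (by omega)
    have hNn : N ∉ Finset.Icc (nI I + 1) (N-1) := by
      simp only [Finset.mem_Icc]; omega
    have hSI : (∑ n ∈ Finset.Icc (nI I + 1) N, β n * (1-(α+1)*y n)) < 0 := by
      rw [hdec, Finset.sum_insert hNn, hyN]
      nlinarith [hU, mul_pos hα hβN]
    rw [hnN, gt_iff_lt, div_lt_iff₀ hα1]
    have hsp := sum_split α β y (Finset.Icc (nI I + 1) N)
    linarith
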